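/- arXiv:2010.13380 — 6 statements merged into one kernel-verified Lean document; each statement's English description precedes it below -/
import Mathlib

section
/- If S = ⌊b·N^2⌋ with constant b > 0, then the probability of complete separation P_c(N) = S!/((S-N)!·S^N) tends to e^{-1/(2b)} as N → ∞. -/
open Filter Finset Topology Real
open scoped Nat

/-!
Writing `S!/((S-N)!·S^N) = ∏_{i<N} (1 - i/S)` and taking logarithms, `log(1 - x) = -x + O(x²)`
turns the logarithm into `-∑_{i<N} i/S + O(N³/S²) = -N²/(2S) + O(N/S) + O(N³/S²)`, which tends
to `-1/(2b)` because `N²/S → 1/b`.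
-/

lemma abs_log_one_sub_add_le {x : ℝ} (hx : |x| ≤ 1 / 2) : |log (1 - x) + x| ≤ 2 * x ^ 2 := by
  have h := abs_log_sub_add_sum_range_le (hx.trans_lt (by norm_num)) 1
  simp only [sum_range_one, zero_add, pow_one, Nat.cast_zero, div_one] at h
  calc |log (1 - x) + x| = |x + log (1 - x)| := by rw [add_comm]
    _ ≤ |x| ^ 2 / (1 - |x|) := h
    _ ≤ 2 * x ^ 2 := by
      rw [div_le_iff₀ (by linarith), sq_abs]
      nlinarith [sq_nonneg x]

lemma sum_range_natCast_div (N : ℕ) (s : ℝ) :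
    ∑ i ∈ range N, (i : ℝ) / s = (N ^ 2 / s - N / s) / 2 := by
  induction N with
  | zero => simp
  | succ n ih =>
    rw [sum_range_succ, ih]
    push_cast
    ring

lemma abs_sum_range_log_one_sub_div_add_le {N : ℕ} {s : ℝ} (h : |N / s| ≤ 1 / 2) :
    |∑ i ∈ range N, (log (1 - i / s) + i / s)| ≤ 2 * (N ^ 2 / s) ^ 2 / N := by
  have hterm : ∀ i ∈ range N, |log (1 - i / s) + i / s| ≤ 2 * (N / s) ^ 2 := by
    intro i hi
    have hi : |(i : ℝ) / s| ≤ |N / s| := by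
      simp only [abs_div, Nat.abs_cast]
      gcongr
      exact (mem_range.1 hi).le
    calc |log (1 - i / s) + i / s| ≤ 2 * (i / s) ^ 2 := abs_log_one_sub_add_le (hi.trans h)
      _ ≤ 2 * (N / s) ^ 2 := by
        rw [← sq_abs (i / s : ℝ), ← sq_abs (N / s : ℝ)]
        gcongr
  calc |∑ i ∈ range N, (log (1 - i / s) + i / s)|
      ≤ ∑ i ∈ range N, |log (1 - i / s) + i / s| := abs_sum_le_sum_abs _ _
    _ ≤ ∑ _i ∈ range N, 2 * (N / s) ^ 2 := sum_le_sum hterm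
    _ = 2 * (N ^ 2 / s) ^ 2 / N := by
      rw [sum_const, card_range, nsmul_eq_mul]
      rcases N.eq_zero_or_pos with rfl | hN
      · simp
      · field_simp

lemma prod_range_one_sub_div_eq_exp_sum_log {N : ℕ} {s : ℝ} (h : |N / s| < 1) :
    ∏ i ∈ range N, (1 - i / s) = exp (∑ i ∈ range N, log (1 - i / s)) := by
  rw [exp_sum]
  refine prod_congr rfl fun i hi => (exp_log ?_).symm
  have hi : |(i : ℝ) / s| < 1 := by
    refine lt_of_le_of_lt ?_ h
    simp only [abs_div, Nat.abs_cast]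
    gcongr
    exact (mem_range.1 hi).le
  linarith [le_abs_self ((i : ℝ) / s)]

lemma factorial_div_factorial_sub_mul_pow {S N : ℕ} (h : N ≤ S) :
    (S ! : ℝ) / ((S - N)! * (S : ℝ) ^ N) = ∏ i ∈ range N, (1 - i / (S : ℝ)) := by
  rcases S.eq_zero_or_pos with rfl | hS
  · obtain rfl : N = 0 := by omega
    simp
  have hS' : (S : ℝ) ≠ 0 := by positivity
  rw [← Nat.factorial_mul_descFactorial h, Nat.cast_mul, mul_div_mul_left _ _ (by positivity),
    Nat.descFactorial_eq_prod_range, Nat.cast_prod]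
  have hterm : ∀ i ∈ range N, 1 - (i : ℝ) / S = ((S - i : ℕ) : ℝ) / S := fun i hi => by
    rw [Nat.cast_sub ((mem_range.1 hi).le.trans h)]
    field_simp
  rw [prod_congr rfl hterm, prod_div_distrib, prod_const, card_range]

theorem tendsto_prod_range_one_sub_div {s : ℕ → ℝ} {c : ℝ}
    (hs : Tendsto (fun N : ℕ => (N : ℝ) ^ 2 / s N) atTop (𝓝 c)) :
    Tendsto (fun N : ℕ => ∏ i ∈ range N, (1 - i / s N)) atTop (𝓝 (exp (-c / 2))) := by
  have hsmall : Tendsto (fun N : ℕ => (N : ℝ) / s N) atTop (𝓝 0) := by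
    refine (hs.div_atTop tendsto_natCast_atTop_atTop).congr' ?_
    filter_upwards [eventually_ne_atTop 0] with N hN
    field_simp
  have hmain : Tendsto (fun N : ℕ => ∑ i ∈ range N, (i : ℝ) / s N) atTop (𝓝 (c / 2)) := by
    simp only [sum_range_natCast_div]
    simpa using (hs.sub hsmall).div_const 2
  have herr :
      Tendsto (fun N : ℕ => ∑ i ∈ range N, (log (1 - i / s N) + i / s N)) atTop (𝓝 0) := by
    refine squeeze_zero_norm' ?_
      (((hs.pow 2).const_mul 2).div_atTop tendsto_natCast_atTop_atTop)
    filter_upwards [hsmall.abs.eventually (ge_mem_nhds (by norm_num : |(0 : ℝ)| < 1 / 2))]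
      with N hN
    exact abs_sum_range_log_one_sub_div_add_le hN
  have hlog : Tendsto (fun N : ℕ => ∑ i ∈ range N, log (1 - i / s N)) atTop (𝓝 (-c / 2)) := by
    rw [neg_div, ← zero_sub]
    exact (herr.sub hmain).congr fun N => by simp only [← sum_sub_distrib, add_sub_cancel_right]
  refine ((continuous_exp.tendsto _).comp hlog).congr' ?_
  filter_upwards [hsmall.abs.eventually (gt_mem_nhds (by norm_num : |(0 : ℝ)| < 1))] with N hN
  exact (prod_range_one_sub_div_eq_exp_sum_log hN).symm

/-- If `S = ⌊b·N^2⌋` with constant `b > 0`, then the probability of complete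
separation `P_c(N) = S!/((S-N)!·S^N)` tends to `e^{-1/(2b)}` as `N → ∞`. -/
theorem complete_separation_prob_tendsto_quadratic (b : ℝ) (hb : 0 < b) :
    Tendsto (fun N : ℕ =>
        ((⌊b * (N : ℝ) ^ 2⌋₊).factorial : ℝ) /
          (((⌊b * (N : ℝ) ^ 2⌋₊ - N).factorial : ℝ) * ((⌊b * (N : ℝ) ^ 2⌋₊ : ℝ)) ^ N))
      atTop (nhds (Real.exp (-1 / (2 * b)))) := by
  have hsq : Tendsto (fun N : ℕ => (N : ℝ) ^ 2) atTop atTop :=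
    (tendsto_pow_atTop two_ne_zero).comp tendsto_natCast_atTop_atTop
  have hS : Tendsto (fun N : ℕ => (N : ℝ) ^ 2 / ⌊b * (N : ℝ) ^ 2⌋₊) atTop (𝓝 b⁻¹) := by
    simpa [inv_div] using ((tendsto_nat_floor_mul_div_atTop hb.le).comp hsq).inv₀ hb.ne'
  have hNS : ∀ᶠ N : ℕ in atTop, N ≤ ⌊b * (N : ℝ) ^ 2⌋₊ := by
    filter_upwards [(tendsto_natCast_atTop_atTop.const_mul_atTop hb).eventually_ge_atTop 1]
      with N hN
    exact Nat.le_floor (by nlinarith)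
  rw [show -1 / (2 * b) = -b⁻¹ / 2 by field_simp]
  refine (tendsto_prod_range_one_sub_div hS).congr' ?_
  filter_upwards [hNS] with N hN
  exact (factorial_div_factorial_sub_mul_pow hN).symm
end

section
/- For 1 < a < 2 and b > 0, the limit as N → ∞ of (1/e)^N · (bN^a/(bN^a - N))^{bN^a - N + 1/2} equals 0. -/
/-!
With `M = b N ^ a`, the logarithm of the expression is `-N + (M - N + 1/2) log (M / (M - N))`.
The trapezoid bound `log (1 + x) ≤ x (x + 2) / (2 (x + 1))` (the first term of the `artanh`
series) gives `(M - N) log (M / (M - N)) ≤ N - N ^ 2 / (2 M)`, so the first-order terms cancel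
and the logarithm is at most `1/2 - N ^ (2 - a) / (2 b)`, which tends to `-∞` because `a < 2`.
-/

open Filter Real

namespace Real

lemma log_one_add_le_of_nonneg {x : ℝ} (hx : 0 ≤ x) :
    log (1 + x) ≤ x * (x + 2) / (2 * (x + 1)) := by
  have hx1 : x + 1 ≠ 0 := by positivity
  have hy : x / (x + 2) < 1 := (div_lt_one (by linarith)).2 (by linarith)
  have h := log_div_le_sum_range_add (div_nonneg hx (by linarith)) hy 0
  have hratio : (1 + x / (x + 2)) / (1 - x / (x + 2)) = 1 + x := by
    field_simp; ring
  have hsq : 1 - (x / (x + 2)) ^ 2 = 4 * (x + 1) / (x + 2) ^ 2 := by field_simp; ring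
  have hbound : (x / (x + 2)) ^ 1 / (1 - (x / (x + 2)) ^ 2) = x * (x + 2) / (4 * (x + 1)) := by
    rw [hsq]; field_simp
  rw [hratio, Finset.sum_range_zero, zero_add, hbound] at h
  calc log (1 + x) = 2 * (1 / 2 * log (1 + x)) := by ring
    _ ≤ 2 * (x * (x + 2) / (4 * (x + 1))) := by gcongr
    _ = x * (x + 2) / (2 * (x + 1)) := by field_simp; ring

end Real

lemma neg_add_mul_log_div_sub_le {M N : ℝ} (hN : 0 < N) (hNM : 2 * N ≤ M) :
    -N + (M - N + 1 / 2) * log (M / (M - N)) ≤ 1 / 2 - N ^ 2 / (2 * M) := by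
  have hMN : 0 < M - N := by linarith
  set x := N / (M - N) with hx
  have hx0 : 0 ≤ x := by positivity
  have hM : M ≠ 0 := by linarith
  have hx_le_one : x ≤ 1 := (div_le_one hMN).2 (by linarith)
  have hbase : M / (M - N) = 1 + x := by rw [hx]; field_simp; ring
  have htrap : (M - N) * (x * (x + 2) / (2 * (x + 1))) = N - N ^ 2 / (2 * M) := by
    rw [hx]; field_simp; ring
  have hlog := log_one_add_le_of_nonneg hx0
  have hlog_le := log_le_sub_one_of_pos (by linarith : 0 < 1 + x)
  rw [hbase]
  linarith [mul_le_mul_of_nonneg_left hlog hMN.le]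

lemma inv_exp_rpow_mul_div_sub_rpow_le {M N : ℝ} (hN : 0 < N) (hNM : 2 * N ≤ M) :
    (1 / exp 1) ^ N * (M / (M - N)) ^ (M - N + 1 / 2) ≤ exp (1 / 2 - N ^ 2 / (2 * M)) := by
  have hbase : 0 < M / (M - N) := div_pos (by linarith) (by linarith)
  rw [one_div, ← exp_neg, ← exp_mul, rpow_def_of_pos hbase, ← exp_add, exp_le_exp]
  linarith [neg_add_mul_log_div_sub_le hN hNM]

lemma eventually_mul_le_mul_rpow {a : ℝ} (ha : 1 < a) {b : ℝ} (hb : 0 < b) (c : ℝ) :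
    ∀ᶠ N : ℝ in atTop, c * N ≤ b * N ^ a := by
  filter_upwards [eventually_gt_atTop 0,
    (tendsto_rpow_atTop (sub_pos.2 ha)).eventually_ge_atTop (c / b)] with N hN hpow
  calc c * N = c / b * b * N := by field_simp
    _ ≤ N ^ (a - 1) * b * N := by gcongr
    _ = b * (N ^ (a - 1) * N) := by ring
    _ = b * N ^ a := by rw [← rpow_add_one hN.ne', sub_add_cancel]

lemma tendsto_sq_div_mul_rpow_atTop {a : ℝ} (ha : a < 2) {b : ℝ} (hb : 0 < b) :
    Tendsto (fun N : ℝ => N ^ 2 / (2 * (b * N ^ a))) atTop atTop := by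
  refine ((tendsto_rpow_atTop (sub_pos.2 ha)).atTop_div_const (by positivity : 0 < 2 * b)).congr' ?_
  filter_upwards [eventually_gt_atTop 0] with N hN
  rw [rpow_sub hN, rpow_two]
  field_simp

/-- For `1 < a < 2` and `b > 0`, the limit as `N → ∞` (over positive reals) of
`(1/e)^N · (bN^a/(bN^a - N))^{bN^a - N + 1/2}` equals `0`. -/
theorem stirling_limit_zero (a b : ℝ) (ha : 1 < a ∧ a < 2) (hb : 0 < b) :
    Tendsto (fun N : ℝ =>
        (1 / Real.exp 1) ^ N *
          (b * N ^ a / (b * N ^ a - N)) ^ (b * N ^ a - N + 1 / 2))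
      atTop (nhds 0) := by
  have hupper : Tendsto (fun N : ℝ => exp (1 / 2 - N ^ 2 / (2 * (b * N ^ a)))) atTop (nhds 0) :=
    tendsto_exp_atBot.comp <| tendsto_atBot_add_const_left _ _ <|
      tendsto_neg_atTop_atBot.comp (tendsto_sq_div_mul_rpow_atTop ha.2 hb)
  have hlarge := (eventually_gt_atTop (0 : ℝ)).and (eventually_mul_le_mul_rpow ha.1 hb 2)
  refine tendsto_of_tendsto_of_tendsto_of_le_of_le' tendsto_const_nhds hupper ?_ ?_
  · filter_upwards [hlarge] with N ⟨hN, hNM⟩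
    have : 0 ≤ b * N ^ a / (b * N ^ a - N) := div_nonneg (by linarith) (by linarith)
    positivity
  · filter_upwards [hlarge] with N ⟨hN, hNM⟩
    exact inv_exp_rpow_mul_div_sub_rpow_le hN hNM
end

section
/- For b > 0, the limit as N → ∞ of (1/e)^N · (bN^2/(bN^2 - N))^{bN^2 - N + 1/2} equals e^{-1/(2b)}. -/
/-!
Put `t = 1 / (b N)`. The base is `(1 - t)⁻¹`, and the logarithm of the expression is
`-(1/b) (t + (1 - t) log (1 - t)) / t² - (1/2) log (1 - t)`. The second-order Taylor expansion
`log (1 - t) = -t - t²/2 + O(t³)` shows that the quotient tends to `1/2` as `t → 0`, so the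
logarithm tends to `-1/(2b)`.
-/

open Filter Topology Real

lemma tendsto_add_one_sub_mul_log_one_sub_div_sq :
    Tendsto (fun t : ℝ => (t + (1 - t) * log (1 - t)) / t ^ 2) (𝓝[≠] 0) (𝓝 (1 / 2)) := by
  set R : ℝ → ℝ := fun t => t + t ^ 2 / 2 + log (1 - t)
  have hR : Tendsto (fun t => R t / t ^ 2) (𝓝[≠] 0) (𝓝 0) := by
    have hbound : ∀ᶠ t in 𝓝[≠] (0 : ℝ), ‖R t / t ^ 2‖ ≤ |t| / (1 - |t|) := by
      filter_upwards [self_mem_nhdsWithin,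
        nhdsWithin_le_nhds (Ioo_mem_nhds (neg_lt_zero.2 one_pos) one_pos)] with t ht h1
      have ht : t ≠ 0 := ht
      have htaylor := abs_log_sub_add_sum_range_le (abs_lt.2 h1) 2
      simp only [Finset.sum_range_succ, Finset.sum_range_zero] at htaylor
      rw [Real.norm_eq_abs, abs_div, abs_pow, div_le_iff₀ (by positivity)]
      calc |R t| ≤ |t| ^ 3 / (1 - |t|) := by convert htaylor using 2; simp only [R]; norm_num
        _ = |t| / (1 - |t|) * |t| ^ 2 := by ring
    have hlim : Tendsto (fun t : ℝ => |t| / (1 - |t|)) (𝓝[≠] 0) (𝓝 0) := by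
      have : ContinuousAt (fun t : ℝ => |t| / (1 - |t|)) 0 := by fun_prop (disch := norm_num)
      simpa using this.tendsto.mono_left nhdsWithin_le_nhds
    exact squeeze_zero_norm' hbound hlim
  have hsum : Tendsto (fun t => (1 + t) / 2 + (1 - t) * (R t / t ^ 2)) (𝓝[≠] 0) (𝓝 (1 / 2)) := by
    have hid : Tendsto (fun t : ℝ => t) (𝓝[≠] 0) (𝓝 0) :=
      tendsto_nhdsWithin_of_tendsto_nhds tendsto_id
    simpa using ((hid.const_add 1).div_const 2).add ((hid.const_sub 1).mul hR)
  refine hsum.congr' ?_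
  filter_upwards [self_mem_nhdsWithin] with t (ht : t ≠ 0)
  simp only [R]
  field_simp
  ring

lemma tendsto_one_div_const_mul_atTop_nhdsNE_zero {b : ℝ} (hb : b ≠ 0) :
    Tendsto (fun N : ℝ => 1 / (b * N)) atTop (𝓝[≠] 0) := by
  refine tendsto_nhdsWithin_iff.2 ⟨?_, ?_⟩
  · simpa [mul_inv, mul_comm] using tendsto_inv_atTop_zero.const_mul b⁻¹
  · filter_upwards [eventually_ne_atTop 0] with N hN
    simp [hb, hN]

lemma tendsto_neg_sub_mul_log_one_sub {b : ℝ} (hb : b ≠ 0) :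
    Tendsto (fun N => -N - (b * N ^ 2 - N + 1 / 2) * log (1 - 1 / (b * N))) atTop
      (𝓝 (-1 / (2 * b))) := by
  have hlog : Tendsto (fun t : ℝ => log (1 - t)) (𝓝[≠] 0) (𝓝 0) := by
    have : ContinuousAt (fun t : ℝ => log (1 - t)) 0 := by fun_prop (disch := norm_num)
    simpa using this.tendsto.mono_left nhdsWithin_le_nhds
  have hφ := (tendsto_add_one_sub_mul_log_one_sub_div_sq.const_mul (-(1 / b))).sub
    (hlog.const_mul (1 / 2))
  have hlim : -(1 / b) * (1 / 2) - 1 / 2 * 0 = -1 / (2 * b) := by field_simp; ring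
  rw [hlim] at hφ
  refine (hφ.comp (tendsto_one_div_const_mul_atTop_nhdsNE_zero hb)).congr' ?_
  filter_upwards [eventually_ne_atTop 0] with N hN
  simp only [Function.comp_apply]
  field_simp
  ring

lemma one_div_exp_rpow_mul_div_rpow_eq_exp {b N : ℝ} (hb : b ≠ 0) (hN : N ≠ 0)
    (hbN : 1 / (b * N) < 1) :
    (1 / exp 1) ^ N * (b * N ^ 2 / (b * N ^ 2 - N)) ^ (b * N ^ 2 - N + 1 / 2) =
      exp (-N - (b * N ^ 2 - N + 1 / 2) * log (1 - 1 / (b * N))) := by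
  have hbase : b * N ^ 2 / (b * N ^ 2 - N) = (1 - 1 / (b * N))⁻¹ := by
    field_simp
  rw [hbase, rpow_def_of_pos (by positivity), rpow_def_of_pos (inv_pos.2 (sub_pos.2 hbN)),
    ← exp_add, one_div, log_inv, log_inv, log_exp]
  ring_nf

/-- For `b > 0`, the limit as `N → ∞` (over positive reals) of
`(1/e)^N · (bN^2/(bN^2 - N))^{bN^2 - N + 1/2}` equals `e^{-1/(2b)}`. -/
theorem stirling_limit_quadratic (b : ℝ) (hb : 0 < b) :
    Tendsto (fun N : ℝ =>
        (1 / Real.exp 1) ^ N *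
          (b * N ^ 2 / (b * N ^ 2 - N)) ^ (b * N ^ 2 - N + 1 / 2))
      atTop (nhds (Real.exp (-1 / (2 * b)))) := by
  have hsmall : ∀ᶠ N in atTop, 1 / (b * N) < 1 :=
    (tendsto_nhdsWithin_iff.1 (tendsto_one_div_const_mul_atTop_nhdsNE_zero hb.ne')).1.eventually
      (eventually_lt_nhds one_pos)
  refine ((continuous_exp.tendsto _).comp (tendsto_neg_sub_mul_log_one_sub hb.ne')).congr' ?_
  filter_upwards [eventually_ne_atTop 0, hsmall] with N hN hbN
  exact (one_div_exp_rpow_mul_div_rpow_eq_exp hb.ne' hN hbN).symm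
end

section
/- For any b > 0, e^{-1/(2b)} plus the integral from 0 to 1 of γ·((1-γ)/b)·e^{γ(γ-2)/(2b)} dγ equals (√(2πb)/2)·erfi(1/√(2b))·e^{-1/(2b)}, where erfi(x) = (2/√π)·∑_{n=0}^∞ x^{2n+1}/(n!(2n+1)). -/
open scoped Real

/-- The imaginary error function, defined by its power series
`erfi(x) = (2/√π)·∑_{n≥0} x^{2n+1}/(n!(2n+1))`. -/
noncomputable def erfi (x : ℝ) : ℝ :=
  (2 / Real.sqrt π) * ∑' n : ℕ, x ^ (2 * n + 1) / (n.factorial * (2 * n + 1))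

/-!
Integrating by parts against the antiderivative `-γ e^{γ(γ-2)/(2b)}` turns the integral into
`∫₀¹ e^{γ(γ-2)/(2b)} - e^{-1/(2b)}`, so the atom cancels. Completing the square
`γ(γ-2) = (1-γ)² - 1`, reflecting `γ ↦ 1-γ` and rescaling by `√(2b)` leaves
`e^{-1/(2b)} √(2b) ∫₀^{1/√(2b)} e^{t²}`, and integrating the exponential series term by term
gives `∫₀^x e^{t²} = (√π/2) erfi x`.
-/

open intervalIntegral

theorem hasSum_integral_exp_sq (x : ℝ) :
    HasSum (fun n : ℕ => x ^ (2 * n + 1) / (n.factorial * (2 * n + 1)))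
      (∫ t in (0:ℝ)..x, Real.exp (t ^ 2)) := by
  have h_term (n : ℕ) : ∫ t in (0:ℝ)..x, t ^ (2 * n) / n.factorial
      = x ^ (2 * n + 1) / (n.factorial * (2 * n + 1)) := by
    rw [integral_div, integral_pow, zero_pow (by omega), sub_zero, div_div]
    push_cast
    ring
  simp only [← h_term]
  refine hasSum_integral_of_dominated_convergence (fun n _ => (x ^ 2) ^ n / n.factorial)
    (fun n => (by fun_prop : Continuous fun t : ℝ => t ^ (2 * n) / n.factorial).aestronglyMeasurable)
    (fun n => MeasureTheory.ae_of_all _ fun t ht => ?_)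
    (MeasureTheory.ae_of_all _ fun _ _ => Real.summable_pow_div_factorial _)
    intervalIntegrable_const
    (MeasureTheory.ae_of_all _ fun t _ => ?_)
  · have ht : t ^ 2 ≤ x ^ 2 := by
      rw [Set.mem_uIoc] at ht
      rcases ht with ⟨h0, hx⟩ | ⟨h0, hx⟩ <;> nlinarith
    rw [pow_mul, Real.norm_of_nonneg (by positivity)]
    gcongr
  · simpa only [pow_mul, Real.exp_eq_exp_ℝ] using
      NormedSpace.expSeries_div_hasSum_exp (t ^ 2)

theorem integral_exp_sq_eq_erfi (x : ℝ) :
    ∫ t in (0:ℝ)..x, Real.exp (t ^ 2) = Real.sqrt π / 2 * erfi x := by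
  have : Real.sqrt π ≠ 0 := (Real.sqrt_pos.2 Real.pi_pos).ne'
  rw [erfi, (hasSum_integral_exp_sq x).tsum_eq]
  field_simp

theorem integral_exp_div_sq_eq_erfi (s a : ℝ) (hs : s ≠ 0) :
    ∫ u in (0:ℝ)..a, Real.exp ((u / s) ^ 2) = s * (Real.sqrt π / 2 * erfi (a / s)) := by
  rw [integral_comp_div (fun t => Real.exp (t ^ 2)) hs, zero_div, integral_exp_sq_eq_erfi,
    smul_eq_mul]

theorem integral_exp_mul_sub_two_div (b : ℝ) :
    ∫ γ in (0:ℝ)..1, Real.exp (γ * (γ - 2) / (2 * b))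
      = Real.exp (-1 / (2 * b)) * ∫ u in (0:ℝ)..1, Real.exp (u ^ 2 / (2 * b)) := by
  have h_square (γ : ℝ) : Real.exp (γ * (γ - 2) / (2 * b))
      = Real.exp (-1 / (2 * b)) * Real.exp ((1 - γ) ^ 2 / (2 * b)) := by
    rw [← Real.exp_add]
    ring_nf
  simp only [h_square, integral_const_mul,
    integral_comp_sub_left (fun u => Real.exp (u ^ 2 / (2 * b))), sub_zero, sub_self]

theorem integral_mul_one_sub_div_mul_exp (b : ℝ) :
    ∫ γ in (0:ℝ)..1, γ * ((1 - γ) / b) * Real.exp (γ * (γ - 2) / (2 * b))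
      = (∫ γ in (0:ℝ)..1, Real.exp (γ * (γ - 2) / (2 * b))) - Real.exp (-1 / (2 * b)) := by
  have h_deriv (γ : ℝ) : HasDerivAt (fun x => -x * Real.exp (x * (x - 2) / (2 * b)))
      (γ * ((1 - γ) / b) * Real.exp (γ * (γ - 2) / (2 * b))
        - Real.exp (γ * (γ - 2) / (2 * b))) γ := by
    refine ((hasDerivAt_id' γ).neg.mul (((hasDerivAt_id' γ).mul
      ((hasDerivAt_id' γ).sub_const 2)).div_const (2 * b)).exp).congr_deriv ?_
    have h_inner : (1 * (γ - 2) + γ * 1) / (2 * b) = (γ - 1) / b := by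
      rw [← mul_div_mul_left (γ - 1) b two_ne_zero]
      ring_nf
    simp only [Pi.mul_apply, Pi.neg_apply, h_inner]
    ring
  have h_ftc := integral_eq_sub_of_hasDerivAt (fun γ _ => h_deriv γ)
    ((by fun_prop : Continuous _).intervalIntegrable 0 1)
  rw [integral_sub ((by fun_prop : Continuous _).intervalIntegrable 0 1)
    ((by fun_prop : Continuous _).intervalIntegrable 0 1)] at h_ftc
  norm_num at h_ftc
  linarith

/-- For any `b > 0`, the expectation of the separation ratio:
`e^{-1/(2b)} + ∫₀¹ γ·((1-γ)/b)·e^{γ(γ-2)/(2b)} dγ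
  = (√(2πb)/2)·erfi(1/√(2b))·e^{-1/(2b)}`. -/
theorem expectation_separation_ratio (b : ℝ) (hb : 0 < b) :
    Real.exp (-1 / (2 * b)) +
      ∫ γ in (0:ℝ)..1, γ * ((1 - γ) / b) * Real.exp (γ * (γ - 2) / (2 * b))
    = (Real.sqrt (2 * π * b) / 2) * erfi (1 / Real.sqrt (2 * b)) *
        Real.exp (-1 / (2 * b)) := by
  have hs : Real.sqrt (2 * b) ≠ 0 := (Real.sqrt_pos.2 (by positivity)).ne'
  have h_scale (u : ℝ) : u ^ 2 / (2 * b) = (u / Real.sqrt (2 * b)) ^ 2 := by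
    rw [div_pow, Real.sq_sqrt (by positivity)]
  rw [integral_mul_one_sub_div_mul_exp, integral_exp_mul_sub_two_div]
  simp only [h_scale]
  rw [integral_exp_div_sq_eq_erfi _ _ hs, show 2 * π * b = π * (2 * b) by ring,
    Real.sqrt_mul Real.pi_pos.le]
  ring
end

section
/- The function E(b) = 1/2 + (√(2πb)/4)·erfi(1/√(2b))·e^{-1/(2b)} is strictly increasing on (0, ∞), tends to 1/2 as b → 0+, and tends to 1 as b → ∞; in particular its range is contained in (1/2, 1). -/
/-! Integrating the exponential series termwise gives `erfi x = (2/√π) x ∫₀¹ e^{x²s²} ds`, hence,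
with `t = 1/(2b)`, `E(b) = (1 + F(t))/2` where `F(t) = ∫₀¹ e^{-t(1-s²)} ds`. The integrand is
strictly decreasing in `t` for `s ∈ (0,1)`, so the continuous function `F` is strictly decreasing,
`F(0) = 1`, and `0 < F(t) ≤ ∫₀¹ e^{-t(1-s)} ds ≤ 1/t`. As `t` decreases from `∞` to `0` when `b`
runs over `(0, ∞)`, `E` increases strictly from `1/2` to `1`. -/

open scoped Real
open Filter

/-- The expected training accuracy `E(b) = 1/2 + (√(2πb)/4)·erfi(1/√(2b))·e^{-1/(2b)}`. -/
noncomputable def expAcc (b : ℝ) : ℝ :=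
  1 / 2 + (Real.sqrt (2 * π * b) / 4) * erfi (1 / Real.sqrt (2 * b)) *
    Real.exp (-1 / (2 * b))

open MeasureTheory intervalIntegral Real

lemma summable_pow_div_factorial_mul_two_mul_add_one (t : ℝ) :
    Summable fun n : ℕ => t ^ n / (n.factorial * (2 * n + 1)) := by
  refine (summable_pow_div_factorial |t|).of_norm_bounded fun n => ?_
  rw [norm_div, norm_pow, Real.norm_eq_abs, Real.norm_of_nonneg (by positivity)]
  gcongr
  exact le_mul_of_one_le_right (by positivity) (by linarith [n.cast_nonneg (α := ℝ)])

lemma integral_mul_sq_pow_div_factorial (t : ℝ) (n : ℕ) :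
    ∫ s in (0 : ℝ)..1, (t * s ^ 2) ^ n / n.factorial = t ^ n / (n.factorial * (2 * n + 1)) := by
  simp_rw [mul_pow, ← pow_mul, mul_div_right_comm, intervalIntegral.integral_const_mul,
    integral_pow]
  push_cast
  field_simp
  simp

lemma tsum_pow_div_factorial_mul_two_mul_add_one (t : ℝ) :
    ∑' n : ℕ, t ^ n / (n.factorial * (2 * n + 1)) = ∫ s in (0 : ℝ)..1, exp (t * s ^ 2) := by
  have h_int (n : ℕ) : Integrable (fun s : ℝ => (t * s ^ 2) ^ n / n.factorial)
      (volume.restrict (Set.Ioc 0 1)) :=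
    (by fun_prop : Continuous fun s : ℝ => (t * s ^ 2) ^ n / n.factorial).integrableOn_Ioc
  have h_norm (n : ℕ) : ∫ s in Set.Ioc (0 : ℝ) 1, ‖(t * s ^ 2) ^ n / (n.factorial : ℝ)‖ =
      |t| ^ n / (n.factorial * (2 * n + 1)) := by
    rw [← integral_mul_sq_pow_div_factorial, integral_of_le zero_le_one]
    congr 1 with s
    rw [norm_div, norm_pow, norm_mul, norm_pow, Real.norm_eq_abs, Real.norm_eq_abs, sq_abs,
      Real.norm_of_nonneg (by positivity)]
  simp_rw [integral_of_le zero_le_one, exp_eq_exp_ℝ, NormedSpace.exp_eq_tsum_div,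
    ← integral_tsum_of_summable_integral_norm h_int
      (by simpa only [h_norm] using summable_pow_div_factorial_mul_two_mul_add_one |t|),
    ← integral_of_le zero_le_one, integral_mul_sq_pow_div_factorial]

lemma erfi_eq_mul_integral (x : ℝ) :
    erfi x = 2 / √π * x * ∫ s in (0 : ℝ)..1, exp (x ^ 2 * s ^ 2) := by
  rw [erfi, ← tsum_pow_div_factorial_mul_two_mul_add_one, mul_assoc, ← tsum_mul_left (a := x)]
  exact congrArg _ (tsum_congr fun n => by ring)

/-- `dawsonRatio (x ^ 2) = D(x) / x` for Dawson's function `D(x) = e^{-x²} ∫₀ˣ e^{u²} du`. -/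
noncomputable def dawsonRatio (t : ℝ) : ℝ :=
  ∫ s in (0 : ℝ)..1, exp (-(t * (1 - s ^ 2)))

lemma intervalIntegrable_dawsonRatio_integrand (t a b : ℝ) :
    IntervalIntegrable (fun s => exp (-(t * (1 - s ^ 2)))) volume a b :=
  Continuous.intervalIntegrable (by fun_prop) a b

lemma continuous_dawsonRatio : Continuous dawsonRatio :=
  continuous_parametric_intervalIntegral_of_continuous' (by fun_prop) 0 1

lemma dawsonRatio_zero : dawsonRatio 0 = 1 := by
  simp [dawsonRatio]

lemma dawsonRatio_pos (t : ℝ) : 0 < dawsonRatio t :=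
  intervalIntegral_pos_of_pos_on (intervalIntegrable_dawsonRatio_integrand t 0 1)
    (fun _ _ => exp_pos _) zero_lt_one

lemma strictAnti_dawsonRatio : StrictAnti dawsonRatio := by
  intro t₁ t₂ h
  rw [dawsonRatio, dawsonRatio, ← sub_pos, ← intervalIntegral.integral_sub
    (intervalIntegrable_dawsonRatio_integrand t₁ 0 1)
    (intervalIntegrable_dawsonRatio_integrand t₂ 0 1)]
  refine intervalIntegral_pos_of_pos_on (Continuous.intervalIntegrable (by fun_prop) _ _)
    (fun s hs => ?_) zero_lt_one
  have : 0 < 1 - s ^ 2 := by nlinarith [hs.1, hs.2]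
  rw [sub_pos, exp_lt_exp]
  nlinarith

lemma dawsonRatio_le_inv {t : ℝ} (ht : 0 < t) : dawsonRatio t ≤ t⁻¹ := by
  have h_le : dawsonRatio t ≤ ∫ s in (0 : ℝ)..1, exp (-(t * (1 - s))) := by
    refine integral_mono_on zero_le_one (intervalIntegrable_dawsonRatio_integrand t 0 1)
      (Continuous.intervalIntegrable (by fun_prop) _ _) fun s hs => ?_
    rw [exp_le_exp]
    nlinarith [hs.1, hs.2, mul_nonneg (mul_nonneg ht.le hs.1) (sub_nonneg.2 hs.2)]
  have h_eq : ∫ s in (0 : ℝ)..1, exp (-(t * (1 - s))) = (1 - exp (-t)) / t := by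
    have h_sub := integral_comp_sub_left (fun u => exp (-(t * u))) (a := 0) (b := 1) 1
    simp only [sub_self, sub_zero] at h_sub
    simp_rw [h_sub, ← neg_mul, integral_comp_mul_left (fun u => exp u) (neg_ne_zero.2 ht.ne'),
      integral_exp, mul_one, mul_zero, exp_zero, smul_eq_mul, inv_neg]
    ring
  calc dawsonRatio t ≤ (1 - exp (-t)) / t := h_eq ▸ h_le
    _ ≤ t⁻¹ := by rw [inv_eq_one_div]; gcongr; linarith [exp_pos (-t)]

lemma tendsto_dawsonRatio_atTop : Tendsto dawsonRatio atTop (nhds 0) :=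
  tendsto_of_tendsto_of_tendsto_of_le_of_le' tendsto_const_nhds tendsto_inv_atTop_zero
    (.of_forall fun t => (dawsonRatio_pos t).le)
    ((eventually_gt_atTop 0).mono fun _ => dawsonRatio_le_inv)

lemma expAcc_eq {b : ℝ} (hb : 0 < b) : expAcc b = 1 / 2 + dawsonRatio (2 * b)⁻¹ / 2 := by
  have hx : (1 / √(2 * b)) ^ 2 = (2 * b)⁻¹ := by
    rw [div_pow, sq_sqrt (by positivity), one_pow, one_div]
  have hcoeff : √(2 * π * b) / 4 * (2 / √π * (1 / √(2 * b))) = 1 / 2 := by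
    rw [show 2 * π * b = π * (2 * b) by ring, sqrt_mul pi_pos.le]
    field_simp
    ring
  have hkernel : (∫ s in (0 : ℝ)..1, exp ((2 * b)⁻¹ * s ^ 2)) * exp (-1 / (2 * b)) =
      dawsonRatio (2 * b)⁻¹ := by
    rw [dawsonRatio, ← intervalIntegral.integral_mul_const]
    congr 1 with s
    rw [← exp_add]
    ring_nf
  rw [expAcc, erfi_eq_mul_integral, hx, ← hkernel]
  linear_combination (∫ s in (0 : ℝ)..1, exp ((2 * b)⁻¹ * s ^ 2)) * exp (-1 / (2 * b)) * hcoeff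

/-- `E(b)` is strictly increasing on `(0,∞)`, tends to `1/2` as `b → 0⁺`, tends to
`1` as `b → ∞`, and in particular takes values in `(1/2, 1)` on `(0,∞)`. -/
theorem expAcc_strictMono_and_limits :
    StrictMonoOn expAcc (Set.Ioi 0) ∧
    Tendsto expAcc (nhdsWithin 0 (Set.Ioi 0)) (nhds (1 / 2)) ∧
    Tendsto expAcc atTop (nhds 1) ∧
    ∀ b : ℝ, 0 < b → expAcc b ∈ Set.Ioo (1 / 2 : ℝ) 1 := by
  have h_inv_zero : Tendsto (fun b : ℝ => (2 * b)⁻¹) (nhdsWithin 0 (Set.Ioi 0)) atTop :=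
    (tendsto_inv_nhdsGT_zero.const_mul_atTop (by norm_num)).congr fun b => (mul_inv 2 b).symm
  have h_inv_top : Tendsto (fun b : ℝ => (2 * b)⁻¹) atTop (nhds 0) :=
    tendsto_inv_atTop_zero.comp (tendsto_id.const_mul_atTop two_pos)
  refine ⟨fun a ha b hb hab => ?_, ?_, ?_, fun b hb => ?_⟩
  · rw [expAcc_eq ha, expAcc_eq hb]
    have := strictAnti_dawsonRatio
      (inv_strictAnti₀ (mul_pos two_pos ha) (by linarith : 2 * a < 2 * b))
    linarith
  · have h := ((tendsto_dawsonRatio_atTop.comp h_inv_zero).div_const 2).const_add (1 / 2 : ℝ)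
    rw [zero_div, add_zero] at h
    exact h.congr' (eventually_mem_nhdsWithin.mono fun b hb => (expAcc_eq hb).symm)
  · have h :=
      (((continuous_dawsonRatio.tendsto 0).comp h_inv_top).div_const 2).const_add (1 / 2 : ℝ)
    rw [dawsonRatio_zero, add_halves] at h
    exact h.congr' ((eventually_gt_atTop 0).mono fun b hb => (expAcc_eq hb).symm)
  · rw [expAcc_eq hb]
    have h_pos := dawsonRatio_pos (2 * b)⁻¹
    have h_lt_one :=
      dawsonRatio_zero ▸ strictAnti_dawsonRatio (by positivity : (0 : ℝ) < (2 * b)⁻¹)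
    constructor <;> linarith
end

section
/- Fix γ ∈ [0, 1] and b > 0, and set S = ⌊bN^2⌋ and m = ⌊γN⌋. Then S!·(S - m)^{N - m}/((S - m)!·S^N) tends to e^{γ(γ-2)/(2b)} as N → ∞. -/
open Filter Finset Real
open scoped Nat

/-!
Since `S! / (S - m)! = S (S - 1) ⋯ (S - m + 1)`, the quantity equals
`∏_{i < N} (1 - min(i, m) / S)`. For `0 ≤ x ≤ c < 1` we have
`exp (-x / (1 - c)) ≤ 1 - x ≤ exp (-x)`; with `c = m / S` this squeezes the product between
`exp (-T / (1 - c))` and `exp (-T)`, where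
`T = ∑_{i < N} min(i, m) / S = m (2N - m - 1) / (2S) → γ (2 - γ) / (2b)` and `c → 0`.
-/

lemma exp_neg_div_one_sub_le_one_sub {x c : ℝ} (hx : 0 ≤ x) (hxc : x ≤ c) (hc : c < 1) :
    exp (-x / (1 - c)) ≤ 1 - x := by
  have hx1 : 0 < 1 - x := by linarith
  rw [← le_log_iff_exp_le hx1]
  calc -x / (1 - c) ≤ -x / (1 - x) := by
        rw [neg_div, neg_div, neg_le_neg_iff]; gcongr
    _ = 1 - (1 - x)⁻¹ := by field_simp; ring
    _ ≤ log (1 - x) := one_sub_inv_le_log_of_pos hx1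

section
variable {ι : Type*} (s : Finset ι) {x : ι → ℝ}

lemma prod_one_sub_le_exp_neg_sum (hx : ∀ i ∈ s, x i ≤ 1) :
    ∏ i ∈ s, (1 - x i) ≤ exp (-∑ i ∈ s, x i) := by
  rw [← sum_neg_distrib, exp_sum]
  exact prod_le_prod (fun i hi => sub_nonneg.2 (hx i hi)) fun i _ => one_sub_le_exp_neg _

lemma exp_neg_sum_div_le_prod_one_sub {c : ℝ} (hc : c < 1) (hx0 : ∀ i ∈ s, 0 ≤ x i)
    (hxc : ∀ i ∈ s, x i ≤ c) :
    exp (-(∑ i ∈ s, x i) / (1 - c)) ≤ ∏ i ∈ s, (1 - x i) := by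
  rw [← sum_neg_distrib, sum_div, exp_sum]
  exact prod_le_prod (fun i _ => (exp_pos _).le)
    fun i hi => exp_neg_div_one_sub_le_one_sub (hx0 i hi) (hxc i hi) hc
end

lemma descFactorial_mul_pow_eq_prod_sub_min (S : ℕ) {m N : ℕ} (hmN : m ≤ N) :
    S.descFactorial m * (S - m) ^ (N - m) = ∏ i ∈ range N, (S - min i m) := by
  obtain ⟨k, rfl⟩ := Nat.exists_eq_add_of_le hmN
  rw [prod_range_add, Nat.descFactorial_eq_prod_range, Nat.add_sub_cancel_left]
  congr 1
  · exact prod_congr rfl fun i hi => by rw [min_eq_left (mem_range.1 hi).le]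
  · simp

lemma sum_range_natCast (n : ℕ) : ∑ i ∈ range n, (i : ℝ) = n * (n - 1) / 2 := by
  induction n with
  | zero => simp
  | succ n ih => rw [sum_range_succ, ih]; push_cast; ring

lemma sum_range_min (m N : ℕ) (hmN : m ≤ N) :
    ∑ i ∈ range N, ((min i m : ℕ) : ℝ) = m * (2 * N - m - 1) / 2 := by
  obtain ⟨k, rfl⟩ := Nat.exists_eq_add_of_le hmN
  have hhead : ∑ i ∈ range m, ((min i m : ℕ) : ℝ) = ∑ i ∈ range m, (i : ℝ) :=
    sum_congr rfl fun i hi => by rw [min_eq_left (mem_range.1 hi).le]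
  have htail : ∑ i ∈ range k, ((min (m + i) m : ℕ) : ℝ) = k * m := by simp
  rw [sum_range_add, hhead, htail, sum_range_natCast]
  push_cast
  ring

lemma factorial_mul_pow_div_eq_prod_one_sub {S m N : ℕ} (hS : 0 < S) (hmS : m ≤ S)
    (hmN : m ≤ N) :
    (S ! : ℝ) * ((S - m : ℕ) : ℝ) ^ (N - m) / (((S - m)! : ℝ) * (S : ℝ) ^ N)
      = ∏ i ∈ range N, (1 - ((min i m : ℕ) : ℝ) / S) := by
  have hS' : (S : ℝ) ≠ 0 := by positivity
  have hprod : ∏ i ∈ range N, (1 - ((min i m : ℕ) : ℝ) / S)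
      = (∏ i ∈ range N, ((S - min i m : ℕ) : ℝ)) / (S : ℝ) ^ N := by
    have hfactor : ∀ i ∈ range N,
        1 - ((min i m : ℕ) : ℝ) / S = ((S - min i m : ℕ) : ℝ) / S :=
      fun i _ => by rw [Nat.cast_sub ((min_le_right i m).trans hmS)]; field_simp
    rw [prod_congr rfl hfactor, prod_div_distrib, prod_const, card_range]
  rw [hprod, ← Nat.cast_prod, ← descFactorial_mul_pow_eq_prod_sub_min S hmN,
    ← Nat.factorial_mul_descFactorial hmS]
  push_cast
  field_simp

lemma tendsto_sum_range_min_div {S m : ℕ → ℕ} {b γ : ℝ} (hb : b ≠ 0)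
    (hS : Tendsto (fun N : ℕ => (S N : ℝ) / (N : ℝ) ^ 2) atTop (nhds b))
    (hm : Tendsto (fun N : ℕ => (m N : ℝ) / N) atTop (nhds γ)) (hmN : ∀ N, m N ≤ N) :
    Tendsto (fun N => ∑ i ∈ range N, ((min i (m N) : ℕ) : ℝ) / S N) atTop
      (nhds (γ * (2 - γ) / (2 * b))) := by
  have h : Tendsto
      (fun N : ℕ => (m N / N : ℝ) * (2 - m N / N - (N : ℝ)⁻¹) / (2 * (S N / N ^ 2))) atTop
      (nhds (γ * (2 - γ - 0) / (2 * b))) :=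
    (hm.mul ((tendsto_const_nhds.sub hm).sub tendsto_inv_atTop_nhds_zero_nat)).div
      (tendsto_const_nhds.mul hS) (mul_ne_zero two_ne_zero hb)
  rw [sub_zero] at h
  refine h.congr' ((hS.eventually_ne hb).mono fun N hSN => ?_)
  have hN : (N : ℝ) ≠ 0 := fun h => hb (by simp_all)
  have hSN : (S N : ℝ) ≠ 0 := fun h => hb (by simp_all)
  simp only [← sum_div, sum_range_min _ _ (hmN N)]
  field_simp

lemma tendsto_div_zero_of_tendsto_div_sq {S m : ℕ → ℕ} {b γ : ℝ} (hb : b ≠ 0)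
    (hS : Tendsto (fun N : ℕ => (S N : ℝ) / (N : ℝ) ^ 2) atTop (nhds b))
    (hm : Tendsto (fun N : ℕ => (m N : ℝ) / N) atTop (nhds γ)) :
    Tendsto (fun N => (m N : ℝ) / S N) atTop (nhds 0) := by
  have h : Tendsto (fun N : ℕ => (m N / N : ℝ) * (N : ℝ)⁻¹ / (S N / N ^ 2)) atTop
      (nhds (γ * 0 / b)) := (hm.mul tendsto_inv_atTop_nhds_zero_nat).div hS hb
  rw [mul_zero, zero_div] at h
  refine h.congr' ((hS.eventually_ne hb).mono fun N hSN => ?_)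
  have hN : (N : ℝ) ≠ 0 := fun h => hb (by simp_all)
  field_simp

theorem tendsto_factorial_mul_pow_div {S m : ℕ → ℕ} {b γ : ℝ} (hb : b ≠ 0)
    (hS : Tendsto (fun N : ℕ => (S N : ℝ) / (N : ℝ) ^ 2) atTop (nhds b))
    (hm : Tendsto (fun N : ℕ => (m N : ℝ) / N) atTop (nhds γ)) (hmN : ∀ N, m N ≤ N) :
    Tendsto (fun N => ((S N)! : ℝ) * ((S N - m N : ℕ) : ℝ) ^ (N - m N)
        / (((S N - m N)! : ℝ) * (S N : ℝ) ^ N)) atTop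
      (nhds (exp (γ * (γ - 2) / (2 * b)))) := by
  set T : ℕ → ℝ := fun N => ∑ i ∈ range N, ((min i (m N) : ℕ) : ℝ) / S N
  set c : ℕ → ℝ := fun N => (m N : ℝ) / S N
  have hc := tendsto_div_zero_of_tendsto_div_sq hb hS hm
  have hT := tendsto_sum_range_min_div hb hS hm hmN
  have hlimit : Tendsto (fun N => exp (-T N / (1 - c N))) atTop
      (nhds (exp (-(γ * (2 - γ) / (2 * b)) / (1 - 0)))) :=
    (hT.neg.div (tendsto_const_nhds.sub hc) (by norm_num)).rexp
  rw [sub_zero, div_one] at hlimit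
  have hterm : ∀ N, ∀ i ∈ range N, 0 ≤ ((min i (m N) : ℕ) : ℝ) / S N ∧
      ((min i (m N) : ℕ) : ℝ) / S N ≤ c N := fun N i _ =>
    ⟨by positivity, div_le_div_of_nonneg_right (by exact_mod_cast min_le_right i (m N))
      (Nat.cast_nonneg _)⟩
  have hlarge : ∀ᶠ N in atTop, c N < 1 ∧
      ((S N)! : ℝ) * ((S N - m N : ℕ) : ℝ) ^ (N - m N)
      / (((S N - m N)! : ℝ) * (S N : ℝ) ^ N)
      = ∏ i ∈ range N, (1 - ((min i (m N) : ℕ) : ℝ) / S N) := by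
    filter_upwards [hS.eventually_ne hb, hc.eventually (eventually_lt_nhds one_pos)]
      with N hSN hc1
    have hpos : (0 : ℝ) < S N := (Nat.cast_nonneg _).lt_of_ne' (div_ne_zero_iff.1 hSN).1
    have hmS : (m N : ℝ) < S N := (div_lt_one hpos).1 hc1
    exact ⟨hc1, factorial_mul_pow_div_eq_prod_one_sub (by exact_mod_cast hpos)
      (by exact_mod_cast hmS.le) (hmN N)⟩
  rw [show γ * (γ - 2) / (2 * b) = -(γ * (2 - γ) / (2 * b)) by ring]
  refine tendsto_of_tendsto_of_tendsto_of_le_of_le' hlimit hT.neg.rexp ?_ ?_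
  · filter_upwards [hlarge] with N ⟨hc1, hN⟩
    rw [hN]
    exact exp_neg_sum_div_le_prod_one_sub _ hc1 (fun i hi => (hterm N i hi).1)
      fun i hi => (hterm N i hi).2
  · filter_upwards [hlarge] with N ⟨hc1, hN⟩
    rw [hN]
    exact prod_one_sub_le_exp_neg_sum _ fun i hi => (hterm N i hi).2.trans hc1.le

/-- Fix `γ ∈ [0,1]` and `b > 0`, and set `S = ⌊bN²⌋`, `m = ⌊γN⌋`. Then the
incomplete-separation probability `S!·(S-m)^{N-m}/((S-m)!·S^N)` tends to
`e^{γ(γ-2)/(2b)}` as `N → ∞`. -/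
theorem incomplete_separation_prob_tendsto (γ b : ℝ) (hγ : γ ∈ Set.Icc (0:ℝ) 1)
    (hb : 0 < b) :
    Tendsto (fun N : ℕ =>
        ((Nat.factorial ⌊b * (N : ℝ) ^ 2⌋₊ : ℝ) *
            ((⌊b * (N : ℝ) ^ 2⌋₊ - ⌊γ * (N : ℝ)⌋₊ : ℕ) : ℝ) ^ (N - ⌊γ * (N : ℝ)⌋₊)) /
          ((Nat.factorial (⌊b * (N : ℝ) ^ 2⌋₊ - ⌊γ * (N : ℝ)⌋₊) : ℝ) *
            ((⌊b * (N : ℝ) ^ 2⌋₊ : ℕ) : ℝ) ^ N))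
      atTop (nhds (Real.exp (γ * (γ - 2) / (2 * b)))) := by
  have hS : Tendsto (fun N : ℕ => (⌊b * (N : ℝ) ^ 2⌋₊ : ℝ) / (N : ℝ) ^ 2) atTop
      (nhds b) :=
    (tendsto_nat_floor_mul_div_atTop hb.le).comp
      ((tendsto_pow_atTop two_ne_zero).comp tendsto_natCast_atTop_atTop)
  have hm : Tendsto (fun N : ℕ => (⌊γ * (N : ℝ)⌋₊ : ℝ) / N) atTop (nhds γ) :=
    (tendsto_nat_floor_mul_div_atTop hγ.1).comp tendsto_natCast_atTop_atTop
  exact tendsto_factorial_mul_pow_div (S := fun N : ℕ => ⌊b * (N : ℝ) ^ 2⌋₊)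
    (m := fun N : ℕ => ⌊γ * (N : ℝ)⌋₊) hb.ne' hS hm fun N =>
    Nat.floor_le_of_le (mul_le_of_le_one_left (Nat.cast_nonneg N) hγ.2)
end
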